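/- Define γ : ℝ → ℝ⁴ by γ(t) = (t, e^{−1/t}, 0, 0) for t > 0, γ(0) = (0,0,0,0), and γ(t) = (t, 0, e^{1/t}, 0) for t < 0. Then γ is smooth with γ'(t) ≠ 0 for all t, and its reparametrization by arc length is a regular curve that admits a generalized Bishop frame of type C but does not admit any generalized Bishop frame of type D. -/

import Mathlib

noncomputable section

open Set

abbrev E4 : Type := EuclideanSpace ℝ (Fin 4)
abbrev Mat4 : Type := Matrix (Fin 4) (Fin 4) ℝ

/-- A matrix-valued map is smooth on `I` (entrywise). -/
def SmoothMat (I : Set ℝ) (Z : ℝ → Mat4) : Prop :=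
  ∀ i j, ContDiffOn ℝ (⊤ : ℕ∞) (fun s => Z s i j) I

/-- `Z' = X · Z` on `I`, derivatives taken entrywise. -/
def MatDerivEq (I : Set ℝ) (Z X : ℝ → Mat4) : Prop :=
  ∀ s ∈ I, ∀ i j, deriv (fun t => Z t i j) s = (X s * Z s) i j

/-- A regular curve parametrized by arc length on `I`. -/
def IsRegularCurve (I : Set ℝ) (γ : ℝ → E4) : Prop :=
  ContDiffOn ℝ (⊤ : ℕ∞) γ I ∧ ∀ s ∈ I, ‖deriv γ s‖ = 1

def IsTwoRegularCurve (I : Set ℝ) (γ : ℝ → E4) : Prop :=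
  IsRegularCurve I γ ∧ ∀ s ∈ I, deriv (deriv γ) s ≠ 0

/-- An orthonormal frame on `γ`: smooth, orthogonal, first row the tangent vector. -/
def IsFrameOn (I : Set ℝ) (γ : ℝ → E4) (Z : ℝ → Mat4) : Prop :=
  SmoothMat I Z ∧ (∀ s ∈ I, Z s ∈ Matrix.orthogonalGroup (Fin 4) ℝ) ∧
    ∀ s ∈ I, ∀ i, Z s 0 i = deriv γ s i

def ShapeB (X : Mat4) : Prop := X 1 2 = 0 ∧ X 1 3 = 0 ∧ X 2 3 = 0
def ShapeC (X : Mat4) : Prop := X 0 3 = 0 ∧ X 1 2 = 0 ∧ X 2 3 = 0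
def ShapeD (X : Mat4) : Prop := X 0 2 = 0 ∧ X 0 3 = 0 ∧ X 2 3 = 0
def ShapeF (X : Mat4) : Prop := X 0 2 = 0 ∧ X 0 3 = 0 ∧ X 1 3 = 0

/-- `γ` admits a generalized Bishop frame whose coefficient matrix has the given shape. -/
def AdmitsFrame (Shape : Mat4 → Prop) (I : Set ℝ) (γ : ℝ → E4) : Prop :=
  ∃ Z X : ℝ → Mat4, IsFrameOn I γ Z ∧ MatDerivEq I Z X ∧ ∀ s ∈ I, Shape (X s)

/-- The example curve (not parametrized by arc length). -/
def curve17 (t : ℝ) : E4 :=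
  if 0 < t then WithLp.toLp 2 ![t, Real.exp (-1 / t), 0, 0]
  else if t < 0 then WithLp.toLp 2 ![t, 0, Real.exp (1 / t), 0]
  else WithLp.toLp 2 ![0, 0, 0, 0]

/-- The arc-length function of curve17 (based at 0). -/
def arcLength17 : ℝ → ℝ := fun t => ∫ u in (0 : ℝ)..t, ‖deriv curve17 u‖

/-- The inverse of the arc-length function. -/
def sigma17 : ℝ → ℝ := Function.invFun arcLength17


namespace Bishop
open Real Matrix

def g := expNegInvGlue
def dg := deriv g
def ddg := deriv dg
lemma g_smooth : ContDiff ℝ (⊤ : ℕ∞) g := expNegInvGlue.contDiff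
lemma dg_smooth : ContDiff ℝ (⊤ : ℕ∞) dg := (contDiff_infty_iff_deriv.mp g_smooth).2
lemma ddg_smooth : ContDiff ℝ (⊤ : ℕ∞) ddg := (contDiff_infty_iff_deriv.mp dg_smooth).2
lemma hg_deriv (x : ℝ) : HasDerivAt g (dg x) x :=
  ((contDiff_infty_iff_deriv.mp g_smooth).1 x).hasDerivAt
lemma hdg_deriv (x : ℝ) : HasDerivAt dg (ddg x) x :=
  ((contDiff_infty_iff_deriv.mp dg_smooth).1 x).hasDerivAt

lemma g_zero {x : ℝ} (h : x ≤ 0) : g x = 0 := expNegInvGlue.zero_of_nonpos h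

lemma hg'_pos {x : ℝ} (h : 0 < x) : HasDerivAt g (Real.exp (-x⁻¹) * x⁻¹^2) x := by
  have h1 : HasDerivAt (fun y : ℝ => -y⁻¹) (x⁻¹^2) x := by
    simpa [Pi.neg_def] using ((hasDerivAt_inv (ne_of_gt h)).neg)
  apply h1.exp.congr_of_eventuallyEq
  filter_upwards [eventually_gt_nhds h] with y hy
  simp [g, expNegInvGlue, not_le.2 hy]

lemma dg_eq {x : ℝ} (h : 0 < x) : dg x = Real.exp (-x⁻¹) * x⁻¹^2 := (hg'_pos h).deriv

lemma dg_zero {x : ℝ} (h : x ≤ 0) : dg x = 0 := by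
  have hc : Continuous dg := dg_smooth.continuous
  have h0 : Set.EqOn dg 0 (Set.Iio 0) := by
    intro y hy
    have : HasDerivAt g 0 y := by
      apply (hasDerivAt_const y (0:ℝ)).congr_of_eventuallyEq
      filter_upwards [eventually_lt_nhds hy] with z hz
      simp [g, expNegInvGlue.zero_of_nonpos hz.le]
    exact this.deriv
  have := h0.closure hc continuous_const
  have h2 : x ∈ closure (Set.Iio (0:ℝ)) := by
    rw [closure_Iio]; exact h
  simpa using this h2

lemma hdg'_pos {x : ℝ} (h : 0 < x) :
    HasDerivAt dg (Real.exp (-x⁻¹) * (x⁻¹^4 - 2*x⁻¹^3)) x := by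
  have h1 : HasDerivAt (fun y : ℝ => -y⁻¹) (x⁻¹^2) x := by
    simpa [Pi.neg_def] using ((hasDerivAt_inv (ne_of_gt h)).neg)
  have h2 : HasDerivAt (fun y : ℝ => y⁻¹^2) (2*x⁻¹ * (-(x^2)⁻¹)) x := by
    simpa [Pi.pow_def] using ((hasDerivAt_inv (ne_of_gt h)).pow 2)
  have h3 := h1.exp.fun_mul h2
  have h4 : HasDerivAt (fun y : ℝ => Real.exp (-y⁻¹) * y⁻¹^2)
      (Real.exp (-x⁻¹) * (x⁻¹^4 - 2*x⁻¹^3)) x := by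
    refine h3.congr_deriv (Eq.symm ?_)
    have hx : x ≠ 0 := ne_of_gt h
    field_simp
    ring
  apply h4.congr_of_eventuallyEq
  filter_upwards [eventually_gt_nhds h] with y hy
  exact dg_eq hy

lemma ddg_eq {x : ℝ} (h : 0 < x) : ddg x = Real.exp (-x⁻¹) * (x⁻¹^4 - 2*x⁻¹^3) :=
  (hdg'_pos h).deriv

lemma ddg_pos {x : ℝ} (h1 : 0 < x) (h2 : x < 1/2) : 0 < ddg x := by
  rw [ddg_eq h1]
  apply mul_pos (Real.exp_pos _)
  have hx : 0 < x⁻¹ := inv_pos.2 h1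
  have h3 : 2 < x⁻¹ := by
    rw [lt_inv_comm₀ (by norm_num) h1]; linarith
  have : x⁻¹^4 = x⁻¹^3 * x⁻¹ := by ring
  rw [this]
  nlinarith [pow_pos hx 3]

lemma dg_mul_dg_neg (t : ℝ) : dg t * dg (-t) = 0 := by
  rcases le_or_gt t 0 with h|h
  · rw [dg_zero h, zero_mul]
  · rw [dg_zero (by linarith : -t ≤ 0), mul_zero]


open Set


def cvec (t : ℝ) : E4 := WithLp.toLp 2 ![t, g t, g (-t), 0]
def dvec (t : ℝ) : E4 := WithLp.toLp 2 ![1, dg t, -dg (-t), 0]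
def v (t : ℝ) : ℝ := Real.sqrt (1 + dg t ^ 2 + dg (-t) ^ 2)

lemma curve_eq : curve17 = cvec := by
  funext t
  unfold curve17 cvec
  rcases lt_trichotomy t 0 with h|h|h
  · rw [if_neg (by linarith), if_pos h]
    have h1 : g t = 0 := g_zero h.le
    have h2 : g (-t) = Real.exp (1/t) := by
      simp only [g, expNegInvGlue, not_le.2 (neg_pos.2 h), if_neg, if_false]
      rw [inv_neg]
      norm_num
    rw [h1, h2]
  · simp [h, g, expNegInvGlue.zero]
  · rw [if_pos h]
    have h1 : g t = Real.exp (-1/t) := by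
      simp [g, expNegInvGlue, not_le.2 h, neg_div, one_div]
    have h2 : g (-t) = 0 := g_zero (by linarith)
    rw [h1, h2]

def ee : E4 ≃L[ℝ] (Fin 4 → ℝ) := EuclideanSpace.equiv (Fin 4) ℝ

lemma hdg_neg (x : ℝ) : HasDerivAt (fun t => g (-t)) (-dg (-x)) x := by
  simpa [Function.comp_def] using (HasDerivAt.comp x (hg_deriv (-x)) (hasDerivAt_neg x))

lemma cvec_hasDeriv (t : ℝ) : HasDerivAt cvec (dvec t) t := by
  have hp : HasDerivAt (fun t => (![t, g t, g (-t), 0] : Fin 4 → ℝ))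
      (![1, dg t, -dg (-t), 0]) t := by
    rw [hasDerivAt_pi]
    intro i
    fin_cases i
    · simpa using hasDerivAt_id' t
    · simpa using hg_deriv t
    · simpa using hdg_neg t
    · simpa using hasDerivAt_const t (0:ℝ)
  exact (ee.symm.hasFDerivAt.comp_hasDerivAt t hp)

lemma cvec_smooth : ContDiff ℝ (⊤ : ℕ∞) cvec := by
  apply (ee.symm.contDiff).comp
  rw [contDiff_pi]
  intro i
  fin_cases i
  · simpa [Function.id_def] using contDiff_id
  · simpa using g_smooth
  · simpa [Function.comp_def] using g_smooth.comp (contDiff_neg)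
  · simpa using contDiff_const (c := (0:ℝ))

lemma curve_deriv (t : ℝ) : deriv curve17 t = dvec t := by
  rw [curve_eq]; exact (cvec_hasDeriv t).deriv

lemma dvec_norm (t : ℝ) : ‖dvec t‖ = v t := by
  rw [EuclideanSpace.norm_eq]
  unfold v
  congr 1
  rw [Fin.sum_univ_four]
  simp [dvec]

lemma v_one_le (t : ℝ) : 1 ≤ v t := by
  have h := Real.sqrt_le_sqrt (show (1:ℝ) ≤ 1 + dg t ^ 2 + dg (-t) ^ 2 by
    nlinarith [sq_nonneg (dg t), sq_nonneg (dg (-t))])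
  rwa [Real.sqrt_one] at h

lemma v_pos (t : ℝ) : 0 < v t := lt_of_lt_of_le one_pos (v_one_le t)
lemma v_ne (t : ℝ) : v t ≠ 0 := (v_pos t).ne'

lemma v_smooth : ContDiff ℝ (⊤ : ℕ∞) v := by
  have h1 : ContDiff ℝ (⊤ : ℕ∞) (fun t => 1 + dg t ^ 2 + dg (-t) ^ 2) := by
    apply ContDiff.add
    · exact contDiff_const.add (dg_smooth.pow 2)
    · exact ((dg_smooth.comp contDiff_neg).pow 2)
  rw [contDiff_iff_contDiffAt]
  intro t
  exact (Real.contDiffAt_sqrt (by nlinarith [sq_nonneg (dg t), sq_nonneg (dg (-t))] : (1 + dg t ^ 2 + dg (-t) ^ 2) ≠ 0)).comp t h1.contDiffAt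

lemma v_cont : Continuous v := v_smooth.continuous

lemma curve_smooth : ContDiff ℝ (⊤ : ℕ∞) curve17 := by rw [curve_eq]; exact cvec_smooth

lemma curve_deriv_ne (t : ℝ) : deriv curve17 t ≠ 0 := by
  rw [curve_deriv]
  intro h
  have : dvec t 0 = 1 := by simp [dvec]
  rw [h] at this
  simp at this

lemma arc_eq : arcLength17 = fun t => ∫ u in (0:ℝ)..t, v u := by
  funext t
  unfold arcLength17
  congr 1
  funext u
  rw [curve_deriv, dvec_norm]

lemma arc_hasDeriv (t : ℝ) : HasDerivAt arcLength17 (v t) t := by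
  rw [arc_eq]
  exact (v_cont.integral_hasStrictDerivAt 0 t).hasDerivAt

lemma arc_mono : StrictMono arcLength17 :=
  strictMono_of_hasDerivAt_pos arc_hasDeriv v_pos

lemma arc_zero : arcLength17 0 = 0 := by rw [arc_eq]; simp

lemma arc_ge {t : ℝ} (h : 0 ≤ t) : t ≤ arcLength17 t := by
  rw [arc_eq]
  have := intervalIntegral.integral_mono_on (μ := MeasureTheory.volume) (a := 0) (b := t)
    (f := fun _ => (1:ℝ)) (g := v) h intervalIntegrable_const
    (v_cont.intervalIntegrable 0 t) (fun x _ => v_one_le x)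
  simpa using this

lemma arc_le {t : ℝ} (h : t ≤ 0) : arcLength17 t ≤ t := by
  rw [arc_eq]
  simp only []
  rw [show (∫ u in (0:ℝ)..t, v u) = -∫ u in t..(0:ℝ), v u from intervalIntegral.integral_symm t 0]
  have := intervalIntegral.integral_mono_on (μ := MeasureTheory.volume) (a := t) (b := 0)
    (f := fun _ => (1:ℝ)) (g := v) h intervalIntegrable_const
    (v_cont.intervalIntegrable t 0) (fun x _ => v_one_le x)
  simp at this
  linarith

lemma arc_cont : Continuous arcLength17 := by
  have : Differentiable ℝ arcLength17 := fun t => (arc_hasDeriv t).differentiableAt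
  exact this.continuous

lemma arc_surj : Function.Surjective arcLength17 := by
  apply Continuous.surjective arc_cont
  · apply Filter.tendsto_atTop_mono' _ _ Filter.tendsto_id
    filter_upwards [Filter.eventually_ge_atTop (0:ℝ)] with t ht
    exact arc_ge ht
  · apply Filter.tendsto_atBot_mono' _ _ Filter.tendsto_id
    filter_upwards [Filter.eventually_le_atBot (0:ℝ)] with t ht
    exact arc_le ht

lemma arc_leftInv : Function.LeftInverse sigma17 arcLength17 :=
  Function.leftInverse_invFun arc_mono.injective

lemma arc_rightInv : Function.RightInverse sigma17 arcLength17 :=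
  Function.rightInverse_invFun arc_surj

lemma sigma_cont : Continuous sigma17 := by
  let φ := StrictMono.orderIsoOfSurjective arcLength17 arc_mono arc_surj
  have h : sigma17 = fun y => φ.symm y := by
    funext y
    apply arc_mono.injective
    rw [arc_rightInv y]
    exact (φ.apply_symm_apply y).symm
  rw [h]
  exact OrderIso.continuous φ.symm

lemma sigma_hasDeriv (s : ℝ) : HasDerivAt sigma17 (v (sigma17 s))⁻¹ s :=
  HasDerivAt.of_local_left_inverse sigma_cont.continuousAt
    (arc_hasDeriv (sigma17 s)) (v_ne _) (Filter.Eventually.of_forall arc_rightInv)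

lemma sigma_smooth : ContDiff ℝ (⊤ : ℕ∞) sigma17 := by
  have key : ∀ n : ℕ, ContDiff ℝ n sigma17 := by
    intro n
    induction n with
    | zero =>
      rw [show ((0:ℕ) : WithTop ℕ∞) = 0 from rfl, contDiff_zero]
      exact sigma_cont
    | succ n ih =>
      rw [show ((n+1 : ℕ) : WithTop ℕ∞) = (n : WithTop ℕ∞) + 1 by norm_cast,
        contDiff_succ_iff_deriv]
      refine ⟨fun s => (sigma_hasDeriv s).differentiableAt, by simp, ?_⟩
      have hd : deriv sigma17 = fun s => (v (sigma17 s))⁻¹ := by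
        funext s; exact (sigma_hasDeriv s).deriv
      rw [hd]
      exact ((v_smooth.of_le (by exact_mod_cast le_top)).comp ih).inv (fun s => v_ne _)
  rw [show ((⊤ : ℕ∞) : WithTop ℕ∞) = ((⊤ : ℕ∞) : WithTop ℕ∞) from rfl, contDiff_infty]
  exact key

lemma sigma_zero : sigma17 0 = 0 := by
  conv_lhs => rw [← arc_zero]
  exact arc_leftInv 0

lemma sigma_mono : StrictMono sigma17 := by
  intro a b h
  have := arc_mono.lt_iff_lt (a := sigma17 a) (b := sigma17 b)
  rw [arc_rightInv, arc_rightInv] at this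
  exact this.mp h

lemma sigma_pos {s : ℝ} (h : 0 < s) : 0 < sigma17 s := by
  have := sigma_mono h
  rwa [sigma_zero] at this

lemma sigma_neg {s : ℝ} (h : s < 0) : sigma17 s < 0 := by
  have := sigma_mono h
  rwa [sigma_zero] at this


lemma gamma_hasDeriv (s : ℝ) :
    HasDerivAt (curve17 ∘ sigma17) ((v (sigma17 s))⁻¹ • dvec (sigma17 s)) s := by
  rw [curve_eq]
  exact (cvec_hasDeriv (sigma17 s)).scomp s (sigma_hasDeriv s)

lemma gamma_deriv (s : ℝ) :
    deriv (curve17 ∘ sigma17) s = (v (sigma17 s))⁻¹ • dvec (sigma17 s) :=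
  (gamma_hasDeriv s).deriv

lemma gamma_deriv_norm (s : ℝ) : ‖deriv (curve17 ∘ sigma17) s‖ = 1 := by
  rw [gamma_deriv, norm_smul, dvec_norm, norm_inv, Real.norm_eq_abs,
    abs_of_pos (v_pos _), inv_mul_cancel₀ (v_ne _)]

lemma gamma_regular : IsRegularCurve Set.univ (curve17 ∘ sigma17) :=
  ⟨(curve_smooth.comp sigma_smooth).contDiffOn, fun s _ => gamma_deriv_norm s⟩

lemma gamma_deriv_apply (s : ℝ) (j : Fin 4) :
    deriv (curve17 ∘ sigma17) s j = (v (sigma17 s))⁻¹ * dvec (sigma17 s) j := by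
  rw [gamma_deriv]
  rfl

def wp (t : ℝ) : ℝ := Real.sqrt (1 + dg t ^ 2)
def wm (t : ℝ) : ℝ := Real.sqrt (1 + dg (-t) ^ 2)

lemma wp_pos (t : ℝ) : 0 < wp t := Real.sqrt_pos.2 (by nlinarith [sq_nonneg (dg t)])
lemma wm_pos (t : ℝ) : 0 < wm t := Real.sqrt_pos.2 (by nlinarith [sq_nonneg (dg (-t))])
lemma wp_ne (t : ℝ) : wp t ≠ 0 := (wp_pos t).ne'
lemma wm_ne (t : ℝ) : wm t ≠ 0 := (wm_pos t).ne'
lemma wp_sq (t : ℝ) : wp t ^ 2 = 1 + dg t ^ 2 :=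
  Real.sq_sqrt (by nlinarith [sq_nonneg (dg t)])
lemma wm_sq (t : ℝ) : wm t ^ 2 = 1 + dg (-t) ^ 2 :=
  Real.sq_sqrt (by nlinarith [sq_nonneg (dg (-t))])
lemma v_sq (t : ℝ) : v t ^ 2 = 1 + dg t ^ 2 + dg (-t) ^ 2 :=
  Real.sq_sqrt (by nlinarith [sq_nonneg (dg t), sq_nonneg (dg (-t))])

lemma wp_smooth : ContDiff ℝ (⊤ : ℕ∞) wp := by
  have h1 : ContDiff ℝ (⊤ : ℕ∞) (fun t => 1 + dg t ^ 2) :=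
    contDiff_const.add (dg_smooth.pow 2)
  rw [contDiff_iff_contDiffAt]
  intro t
  exact (Real.contDiffAt_sqrt (by nlinarith [sq_nonneg (dg t)] :
    (1 + dg t ^ 2) ≠ 0)).comp t h1.contDiffAt

lemma wm_smooth : ContDiff ℝ (⊤ : ℕ∞) wm := by
  have h1 : ContDiff ℝ (⊤ : ℕ∞) (fun t => 1 + dg (-t) ^ 2) :=
    contDiff_const.add ((dg_smooth.comp contDiff_neg).pow 2)
  rw [contDiff_iff_contDiffAt]
  intro t
  exact (Real.contDiffAt_sqrt (by nlinarith [sq_nonneg (dg (-t))] :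
    (1 + dg (-t) ^ 2) ≠ 0)).comp t h1.contDiffAt

def Zrow0 (t : ℝ) : Fin 4 → ℝ := ![(v t)⁻¹, dg t * (v t)⁻¹, -(dg (-t) * (v t)⁻¹), 0]
def Zrow1 (t : ℝ) : Fin 4 → ℝ := ![-(dg t * (wp t)⁻¹), (wp t)⁻¹, 0, 0]
def Zrow2 (t : ℝ) : Fin 4 → ℝ := ![dg (-t) * (wm t)⁻¹, 0, (wm t)⁻¹, 0]

def Zmat (s : ℝ) : Mat4 :=
  Matrix.of ![Zrow0 (sigma17 s), Zrow1 (sigma17 s), Zrow2 (sigma17 s), ![0,0,0,1]]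

lemma Zmat_orth (s : ℝ) : Zmat s ∈ Matrix.orthogonalGroup (Fin 4) ℝ := by
  rw [Matrix.mem_orthogonalGroup_iff]
  set t := sigma17 s with ht
  have hv := v_sq t
  have hwp := wp_sq t
  have hwm := wm_sq t
  have h1 := v_ne t
  have h2 := wp_ne t
  have h3 := wm_ne t
  rcases mul_eq_zero.mp (dg_mul_dg_neg t) with hz|hz <;>
  · simp only [hz] at hv hwp hwm
    ext i j
    rw [Matrix.mul_apply, Fin.sum_univ_four]
    fin_cases i <;> fin_cases j <;>
      simp [Zmat, Zrow0, Zrow1, Zrow2, Matrix.one_apply, Matrix.vecHead, Matrix.vecTail,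
        ← ht, hz]
    all_goals try ring_nf
    all_goals field_simp
    all_goals nlinarith [hv, hwp, hwm]
lemma comp_smooth {f : ℝ → ℝ} (hf : ContDiff ℝ (⊤ : ℕ∞) f) :
    ContDiff ℝ (⊤ : ℕ∞) (fun s => f (sigma17 s)) := hf.comp sigma_smooth

lemma vinv_smooth : ContDiff ℝ (⊤ : ℕ∞) (fun t => (v t)⁻¹) := v_smooth.inv v_ne
lemma wpinv_smooth : ContDiff ℝ (⊤ : ℕ∞) (fun t => (wp t)⁻¹) := wp_smooth.inv wp_ne
lemma wminv_smooth : ContDiff ℝ (⊤ : ℕ∞) (fun t => (wm t)⁻¹) := wm_smooth.inv wm_ne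
lemma dgneg_smooth : ContDiff ℝ (⊤ : ℕ∞) (fun t => dg (-t)) := dg_smooth.comp contDiff_neg

lemma Zmat_smooth : SmoothMat Set.univ Zmat := by
  intro i j
  apply ContDiff.contDiffOn
  fin_cases i <;> fin_cases j <;>
    simp only [Zmat, Matrix.of_apply, Matrix.cons_val', Matrix.cons_val_zero,
      Matrix.cons_val_one, Matrix.head_cons, Matrix.empty_val', Matrix.cons_val_fin_one,
      Matrix.head_fin_const, Zrow0, Zrow1, Zrow2, Matrix.cons_val_two, Matrix.cons_val_three,
      Matrix.tail_cons, Matrix.vecHead, Matrix.vecTail, Fin.isValue]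
  · exact comp_smooth vinv_smooth
  · exact comp_smooth (dg_smooth.mul vinv_smooth)
  · exact comp_smooth ((dgneg_smooth.mul vinv_smooth)).neg
  · exact contDiff_const
  · exact comp_smooth (dg_smooth.mul wpinv_smooth).neg
  · exact comp_smooth wpinv_smooth
  · exact contDiff_const
  · exact contDiff_const
  · exact comp_smooth (dgneg_smooth.mul wminv_smooth)
  · exact contDiff_const
  · exact comp_smooth wminv_smooth
  · exact contDiff_const
  · exact contDiff_const
  · exact contDiff_const
  · exact contDiff_const
  · exact contDiff_const

lemma Zmat_first_row (s : ℝ) (i : Fin 4) :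
    Zmat s 0 i = deriv (curve17 ∘ sigma17) s i := by
  rw [gamma_deriv_apply]
  fin_cases i <;>
    simp [Zmat, Zrow0, dvec, Matrix.vecHead, Matrix.vecTail] <;> ring

lemma Zmat_frameOn : IsFrameOn Set.univ (curve17 ∘ sigma17) Zmat :=
  ⟨Zmat_smooth, fun s _ => Zmat_orth s, fun s _ i => Zmat_first_row s i⟩

def Zd (s : ℝ) : Mat4 := Matrix.of fun i j => deriv (fun u => Zmat u i j) s
def Xmat (s : ℝ) : Mat4 := Zd s * (Zmat s)ᵀ

lemma Zmat_star (s : ℝ) : star (Zmat s) = (Zmat s)ᵀ := by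
  ext i j
  simp [Matrix.star_apply]

lemma Zmat_transpose_mul (s : ℝ) : (Zmat s)ᵀ * Zmat s = 1 := by
  have h := (Matrix.mem_orthogonalGroup_iff _ _).mp (Zmat_orth s)
  rwa [mul_eq_one_comm] at h

lemma Zmat_derivEq : MatDerivEq Set.univ Zmat Xmat := by
  intro s _ i j
  have : Xmat s * Zmat s = Zd s := by
    rw [Xmat, Matrix.mul_assoc, Zmat_transpose_mul, Matrix.mul_one]
  rw [this]
  rfl

lemma Xmat_apply (s : ℝ) (i j : Fin 4) :
    Xmat s i j = ∑ k, deriv (fun u => Zmat u i k) s * Zmat s j k := by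
  rw [Xmat, Matrix.mul_apply]
  simp [Zd, Matrix.transpose_apply]

lemma Zmat_03 (u : ℝ) : Zmat u 0 3 = 0 := by
  simp [Zmat, Zrow0, Matrix.vecHead, Matrix.vecTail]
lemma Zmat_12 (u : ℝ) : Zmat u 1 2 = 0 := by
  simp [Zmat, Zrow1, Matrix.vecHead, Matrix.vecTail]
lemma Zmat_13 (u : ℝ) : Zmat u 1 3 = 0 := by
  simp [Zmat, Zrow1, Matrix.vecHead, Matrix.vecTail]
lemma Zmat_21 (u : ℝ) : Zmat u 2 1 = 0 := by
  simp [Zmat, Zrow2, Matrix.vecHead, Matrix.vecTail]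
lemma Zmat_23 (u : ℝ) : Zmat u 2 3 = 0 := by
  simp [Zmat, Zrow2, Matrix.vecHead, Matrix.vecTail]
lemma Zmat_20 (u : ℝ) : Zmat u 2 0 = dg (-sigma17 u) * (wm (sigma17 u))⁻¹ := by
  simp [Zmat, Zrow2, Matrix.vecHead, Matrix.vecTail]
lemma Zmat_10 (u : ℝ) : Zmat u 1 0 = -(dg (sigma17 u) * (wp (sigma17 u))⁻¹) := by
  simp [Zmat, Zrow1, Matrix.vecHead, Matrix.vecTail]
lemma Zmat_row3 (u : ℝ) (k : Fin 4) : Zmat u 3 k = (![0,0,0,1] : Fin 4 → ℝ) k := by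
  simp [Zmat]

lemma Xmat_03 (s : ℝ) : Xmat s 0 3 = 0 := by
  rw [Xmat_apply, Fin.sum_univ_four]
  have h30 : Zmat s 3 0 = 0 := by simp [Zmat_row3]
  have h31 : Zmat s 3 1 = 0 := by
    rw [Zmat_row3]; simp [Matrix.vecHead, Matrix.vecTail]
  have h32 : Zmat s 3 2 = 0 := by
    rw [Zmat_row3]; simp [Matrix.vecHead, Matrix.vecTail]
  have h33 : Zmat s 3 3 = 1 := by
    rw [Zmat_row3]; simp [Matrix.vecHead, Matrix.vecTail]
  rw [h30, h31, h32, h33]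
  have : (fun u => Zmat u 0 3) = fun _ => (0:ℝ) := funext fun u => Zmat_03 u
  rw [this, deriv_const]
  ring

lemma Xmat_23 (s : ℝ) : Xmat s 2 3 = 0 := by
  rw [Xmat_apply, Fin.sum_univ_four]
  have h30 : Zmat s 3 0 = 0 := by simp [Zmat_row3]
  have h31 : Zmat s 3 1 = 0 := by
    rw [Zmat_row3]; simp [Matrix.vecHead, Matrix.vecTail]
  have h32 : Zmat s 3 2 = 0 := by
    rw [Zmat_row3]; simp [Matrix.vecHead, Matrix.vecTail]
  have h33 : Zmat s 3 3 = 1 := by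
    rw [Zmat_row3]; simp [Matrix.vecHead, Matrix.vecTail]
  rw [h30, h31, h32, h33]
  have : (fun u => Zmat u 2 3) = fun _ => (0:ℝ) := funext fun u => Zmat_23 u
  rw [this, deriv_const]
  ring

lemma key12 (s : ℝ) : deriv (fun u => Zmat u 1 0) s * dg (-sigma17 s) = 0 := by
  rcases le_or_gt 0 (sigma17 s) with h|h
  · rw [dg_zero (neg_nonpos.2 h), mul_zero]
  · have hopen : IsOpen {u : ℝ | sigma17 u < 0} := isOpen_lt sigma_cont continuous_const
    have hev : (fun u => Zmat u 1 0) =ᶠ[nhds s] fun _ => (0:ℝ) := by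
      filter_upwards [hopen.mem_nhds h] with u hu
      rw [Zmat_10, dg_zero (le_of_lt hu)]
      ring
    rw [hev.deriv_eq, deriv_const, zero_mul]

lemma Xmat_12 (s : ℝ) : Xmat s 1 2 = 0 := by
  rw [Xmat_apply, Fin.sum_univ_four]
  rw [Zmat_21, Zmat_23, Zmat_20]
  have h2 : (fun u => Zmat u 1 2) = fun _ => (0:ℝ) := funext fun u => Zmat_12 u
  rw [h2, deriv_const]
  have h3 := key12 s
  calc deriv (fun u => Zmat u 1 0) s * (dg (-sigma17 s) * (wm (sigma17 s))⁻¹) +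
      deriv (fun u => Zmat u 1 1) s * 0 + 0 * Zmat s 2 2 + deriv (fun u => Zmat u 1 3) s * 0
      = (deriv (fun u => Zmat u 1 0) s * dg (-sigma17 s)) * (wm (sigma17 s))⁻¹ := by ring
    _ = 0 := by rw [h3, zero_mul]

lemma Xmat_shapeC (s : ℝ) : ShapeC (Xmat s) := ⟨Xmat_03 s, Xmat_12 s, Xmat_23 s⟩

lemma admits_C : AdmitsFrame ShapeC Set.univ (curve17 ∘ sigma17) :=
  ⟨Zmat, Xmat, Zmat_frameOn, Zmat_derivEq, fun s _ => Xmat_shapeC s⟩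

def T0f (u : ℝ) : ℝ := (v (sigma17 u))⁻¹
def T1f (u : ℝ) : ℝ := (v (sigma17 u))⁻¹ * dg (sigma17 u)
def T2f (u : ℝ) : ℝ := (v (sigma17 u))⁻¹ * -dg (-sigma17 u)

lemma gamma_col0 (u : ℝ) : deriv (curve17 ∘ sigma17) u 0 = T0f u := by
  rw [gamma_deriv_apply]; simp [dvec, T0f]
lemma gamma_col1 (u : ℝ) : deriv (curve17 ∘ sigma17) u 1 = T1f u := by
  rw [gamma_deriv_apply]; simp [dvec, T1f, Matrix.vecHead, Matrix.vecTail]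
lemma gamma_col2 (u : ℝ) : deriv (curve17 ∘ sigma17) u 2 = T2f u := by
  rw [gamma_deriv_apply]; simp [dvec, T2f, Matrix.vecHead, Matrix.vecTail]
lemma gamma_col3 (u : ℝ) : deriv (curve17 ∘ sigma17) u 3 = 0 := by
  rw [gamma_deriv_apply]; simp [dvec, Matrix.vecHead, Matrix.vecTail]

lemma v_zero_eq : v 0 = 1 := by
  unfold v
  rw [show (-(0:ℝ)) = 0 by norm_num, dg_zero le_rfl]
  norm_num

lemma T0f_zero : T0f 0 = 1 := by
  unfold T0f
  rw [sigma_zero, v_zero_eq]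
  norm_num

lemma v_eq_wp {t : ℝ} (h : 0 < t) : v t = wp t := by
  unfold v wp
  rw [dg_zero (by linarith : -t ≤ 0)]
  norm_num

lemma v_eq_wm {t : ℝ} (h : t < 0) : v t = wm t := by
  unfold v wm
  rw [dg_zero h.le]
  norm_num

lemma hwp_deriv (t : ℝ) :
    HasDerivAt wp (1 / (2 * wp t) * (2 * dg t ^ 1 * ddg t)) t := by
  have h1 : HasDerivAt (fun x => 1 + dg x ^ 2) (2 * dg t ^ 1 * ddg t) t := by
    simpa using ((hdg_deriv t).pow 2).const_add 1
  have hne : 1 + dg t ^ 2 ≠ 0 := by nlinarith [sq_nonneg (dg t)]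
  have := (Real.hasDerivAt_sqrt hne).comp t h1
  simpa [show wp = fun x => √(1 + dg x ^ 2) from rfl, Function.comp_def] using this

lemma hdgneg_deriv (t : ℝ) : HasDerivAt (fun x => dg (-x)) (-ddg (-t)) t := by
  simpa [Function.comp_def] using (HasDerivAt.comp t (hdg_deriv (-t)) (hasDerivAt_neg t))

lemma hwm_deriv (t : ℝ) :
    HasDerivAt wm (1 / (2 * wm t) * (2 * dg (-t) ^ 1 * -ddg (-t))) t := by
  have h1 : HasDerivAt (fun x => 1 + dg (-x) ^ 2) (2 * dg (-t) ^ 1 * -ddg (-t)) t := by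
    simpa using ((hdgneg_deriv t).pow 2).const_add 1
  have hne : 1 + dg (-t) ^ 2 ≠ 0 := by nlinarith [sq_nonneg (dg (-t))]
  have := (Real.hasDerivAt_sqrt hne).comp t h1
  simpa [show wm = fun x => √(1 + dg (-x) ^ 2) from rfl, Function.comp_def] using this

/-- Derivative of `t ↦ (wp t)⁻¹ * dg t` equals `ddg t / wp t ^ 3`. -/
lemma hHp_deriv (t : ℝ) :
    HasDerivAt (fun x => (wp x)⁻¹ * dg x) (ddg t / wp t ^ 3) t := by
  have h3 : HasDerivAt (fun x => (wp x)⁻¹)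
      (-(1 / (2 * wp t) * (2 * dg t ^ 1 * ddg t)) / wp t ^ 2) t :=
    (hwp_deriv t).inv (wp_ne t)
  have h4 := h3.fun_mul (hdg_deriv t)
  refine h4.congr_deriv (Eq.symm ?_)
  have hne := wp_ne t
  have hsq := wp_sq t
  field_simp
  linear_combination (-ddg t) * hsq

/-- Derivative of `t ↦ (wm t)⁻¹ * -dg (-t)` equals `ddg (-t) / wm t ^ 3`. -/
lemma hHm_deriv (t : ℝ) :
    HasDerivAt (fun x => (wm x)⁻¹ * -dg (-x)) (ddg (-t) / wm t ^ 3) t := by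
  have h3 : HasDerivAt (fun x => (wm x)⁻¹)
      (-(1 / (2 * wm t) * (2 * dg (-t) ^ 1 * -ddg (-t))) / wm t ^ 2) t :=
    (hwm_deriv t).inv (wm_ne t)
  have h4 := h3.fun_mul (hdgneg_deriv t).fun_neg
  refine h4.congr_deriv (Eq.symm ?_)
  have hne := wm_ne t
  have hsq := wm_sq t
  field_simp
  linear_combination (-ddg (-t)) * hsq

lemma deriv_T1f_ne {s : ℝ} (h1 : 0 < sigma17 s) (h2 : sigma17 s < 1/2) :
    deriv T1f s ≠ 0 := by
  have hopen : IsOpen {u : ℝ | 0 < sigma17 u} := isOpen_lt continuous_const sigma_cont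
  have hev : T1f =ᶠ[nhds s] fun u => (wp (sigma17 u))⁻¹ * dg (sigma17 u) := by
    filter_upwards [hopen.mem_nhds h1] with u hu
    unfold T1f
    rw [v_eq_wp hu, mul_comm]
  have hcomp : HasDerivAt (fun u => (wp (sigma17 u))⁻¹ * dg (sigma17 u))
      (ddg (sigma17 s) / wp (sigma17 s) ^ 3 * (v (sigma17 s))⁻¹) s :=
    HasDerivAt.comp s (hHp_deriv (sigma17 s)) (sigma_hasDeriv s)
  rw [hev.deriv_eq, hcomp.deriv]
  have hd := ddg_pos h1 h2
  exact ne_of_gt (mul_pos (div_pos hd (pow_pos (wp_pos _) 3)) (inv_pos.2 (v_pos _)))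

lemma deriv_T2f_ne {s : ℝ} (h1 : -(1/2) < sigma17 s) (h2 : sigma17 s < 0) :
    deriv T2f s ≠ 0 := by
  have hopen : IsOpen {u : ℝ | sigma17 u < 0} := isOpen_lt sigma_cont continuous_const
  have hev : T2f =ᶠ[nhds s] fun u => (wm (sigma17 u))⁻¹ * -dg (-sigma17 u) := by
    filter_upwards [hopen.mem_nhds h2] with u hu
    unfold T2f
    rw [v_eq_wm hu]
  have hcomp : HasDerivAt (fun u => (wm (sigma17 u))⁻¹ * -dg (-sigma17 u))
      (ddg (-sigma17 s) / wm (sigma17 s) ^ 3 * (v (sigma17 s))⁻¹) s :=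
    HasDerivAt.comp s (hHm_deriv (sigma17 s)) (sigma_hasDeriv s)
  rw [hev.deriv_eq, hcomp.deriv]
  have hd : 0 < ddg (-sigma17 s) := ddg_pos (by linarith) (by linarith)
  exact ne_of_gt (mul_pos (div_pos hd (pow_pos (wm_pos _) 3)) (inv_pos.2 (v_pos _)))

lemma deriv_T1f_left {s : ℝ} (h : sigma17 s < 0) : deriv T1f s = 0 := by
  have hopen : IsOpen {u : ℝ | sigma17 u < 0} := isOpen_lt sigma_cont continuous_const
  have hev : T1f =ᶠ[nhds s] fun _ => (0:ℝ) := by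
    filter_upwards [hopen.mem_nhds h] with u hu
    unfold T1f
    rw [dg_zero hu.le, mul_zero]
  rw [hev.deriv_eq, deriv_const]

lemma deriv_T2f_right {s : ℝ} (h : 0 < sigma17 s) : deriv T2f s = 0 := by
  have hopen : IsOpen {u : ℝ | 0 < sigma17 u} := isOpen_lt continuous_const sigma_cont
  have hev : T2f =ᶠ[nhds s] fun _ => (0:ℝ) := by
    filter_upwards [hopen.mem_nhds h] with u hu
    unfold T2f
    rw [dg_zero (by linarith : -sigma17 u ≤ 0)]
    ring
  rw [hev.deriv_eq, deriv_const]

lemma T1f_left {s : ℝ} (h : sigma17 s < 0) : T1f s = 0 := by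
  unfold T1f; rw [dg_zero h.le, mul_zero]

lemma T2f_right {s : ℝ} (h : 0 < sigma17 s) : T2f s = 0 := by
  unfold T2f; rw [dg_zero (by linarith : -sigma17 s ≤ 0)]; ring

lemma not_admits_D : ¬ AdmitsFrame ShapeD Set.univ (curve17 ∘ sigma17) := by
  rintro ⟨Z, X, ⟨hsm, horth, hrow⟩, hder, hshape⟩
  have hcd : ∀ i j, ContDiff ℝ (⊤ : ℕ∞) (fun u => Z u i j) :=
    fun i j => contDiffOn_univ.mp (hsm i j)
  have hdiff : ∀ i j, Differentiable ℝ (fun u => Z u i j) :=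
    fun i j => (hcd i j).differentiable (by simp)
  have hZ00f : (fun u => Z u 0 0) = T0f :=
    funext fun u => (hrow u trivial 0).trans (gamma_col0 u)
  have hZ01f : (fun u => Z u 0 1) = T1f :=
    funext fun u => (hrow u trivial 1).trans (gamma_col1 u)
  have hZ02f : (fun u => Z u 0 2) = T2f :=
    funext fun u => (hrow u trivial 2).trans (gamma_col2 u)
  have hZ03f : (fun u => Z u 0 3) = fun _ => (0:ℝ) :=
    funext fun u => (hrow u trivial 3).trans (gamma_col3 u)
  have hZZt : ∀ s, Z s * (Z s)ᵀ = 1 := by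
    intro s
    have h := (Matrix.mem_orthogonalGroup_iff _ _).mp (horth s trivial)
    have hst : star (Z s) = (Z s)ᵀ := by
      ext i j; simp [Matrix.star_apply]
    exact h
  have hent : ∀ s (i j : Fin 4),
      Z s i 0 * Z s j 0 + Z s i 1 * Z s j 1 + Z s i 2 * Z s j 2 + Z s i 3 * Z s j 3
        = (1 : Mat4) i j := by
    intro s i j
    have h : (Z s * (Z s)ᵀ) i j = (1 : Mat4) i j := by rw [hZZt s]
    rw [Matrix.mul_apply, Fin.sum_univ_four] at h
    simpa [Matrix.transpose_apply] using h
  have h00 : ∀ s, Z s 0 0 * Z s 0 0 + Z s 0 1 * Z s 0 1 + Z s 0 2 * Z s 0 2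
      + Z s 0 3 * Z s 0 3 = 1 := by
    intro s; simpa [Matrix.one_apply] using hent s 0 0
  have h01 : ∀ s, Z s 0 0 * Z s 1 0 + Z s 0 1 * Z s 1 1 + Z s 0 2 * Z s 1 2
      + Z s 0 3 * Z s 1 3 = 0 := by
    intro s; simpa [Matrix.one_apply] using hent s 0 1
  have h11 : ∀ s, Z s 1 0 * Z s 1 0 + Z s 1 1 * Z s 1 1 + Z s 1 2 * Z s 1 2
      + Z s 1 3 * Z s 1 3 = 1 := by
    intro s; simpa [Matrix.one_apply] using hent s 1 1
  have hD : ∀ s (j : Fin 4), deriv (fun u => Z u 0 j) s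
      = X s 0 0 * Z s 0 j + X s 0 1 * Z s 1 j := by
    intro s j
    have h := hder s trivial 0 j
    rw [Matrix.mul_apply, Fin.sum_univ_four, (hshape s trivial).1,
      (hshape s trivial).2.1] at h
    rw [h]; ring
  -- X s 0 0 = 0
  have hX00 : ∀ s, X s 0 0 = 0 := by
    intro s
    have hd : ∀ j : Fin 4, HasDerivAt (fun u => Z u 0 j)
        (deriv (fun u => Z u 0 j) s) s := fun j => ((hdiff 0 j) s).hasDerivAt
    have hF : HasDerivAt (fun u => Z u 0 0 * Z u 0 0 + Z u 0 1 * Z u 0 1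
        + Z u 0 2 * Z u 0 2 + Z u 0 3 * Z u 0 3)
        (deriv (fun u => Z u 0 0) s * Z s 0 0 + Z s 0 0 * deriv (fun u => Z u 0 0) s
        + (deriv (fun u => Z u 0 1) s * Z s 0 1 + Z s 0 1 * deriv (fun u => Z u 0 1) s)
        + (deriv (fun u => Z u 0 2) s * Z s 0 2 + Z s 0 2 * deriv (fun u => Z u 0 2) s)
        + (deriv (fun u => Z u 0 3) s * Z s 0 3 + Z s 0 3 * deriv (fun u => Z u 0 3) s)) s :=
      ((((hd 0).mul (hd 0)).add ((hd 1).mul (hd 1))).add ((hd 2).mul (hd 2))).add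
        ((hd 3).mul (hd 3))
    have hFc : (fun u => Z u 0 0 * Z u 0 0 + Z u 0 1 * Z u 0 1
        + Z u 0 2 * Z u 0 2 + Z u 0 3 * Z u 0 3) = fun _ => (1:ℝ) :=
      funext fun u => h00 u
    have hzero := hF.deriv
    rw [hFc, deriv_const] at hzero
    have e0 := hD s 0
    have e1 := hD s 1
    have e2 := hD s 2
    have e3 := hD s 3
    have q00 := h00 s
    have q01 := h01 s
    linear_combination -(1/2) * hzero - Z s 0 0 * e0 - Z s 0 1 * e1 - Z s 0 2 * e2
      - Z s 0 3 * e3 - X s 0 0 * q00 - X s 0 1 * q01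
  -- the endpoints of the two regions
  have ha : 0 < arcLength17 (1/2) := by
    have := arc_mono (show (0:ℝ) < 1/2 by norm_num)
    rwa [arc_zero] at this
  have hb : arcLength17 (-(1/2)) < 0 := by
    have := arc_mono (show (-(1/2) : ℝ) < 0 by norm_num)
    rwa [arc_zero] at this
  -- right region
  have hright : ∀ s ∈ Ioo (0:ℝ) (arcLength17 (1/2)),
      Z s 1 1 ^ 2 = Z s 0 0 ^ 2 := by
    rintro s ⟨hs1, hs2⟩
    have hσ1 : 0 < sigma17 s := sigma_pos hs1
    have hσ2 : sigma17 s < 1/2 := by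
      have := sigma_mono hs2
      rwa [arc_leftInv] at this
    have hd1 : deriv (fun u => Z u 0 1) s = X s 0 1 * Z s 1 1 := by
      rw [hD s 1, hX00 s, zero_mul, zero_add]
    have hne1 : deriv (fun u => Z u 0 1) s ≠ 0 := by
      rw [hZ01f]; exact deriv_T1f_ne hσ1 hσ2
    have hX01 : X s 0 1 ≠ 0 := by
      intro h
      rw [hd1, h, zero_mul] at hne1
      exact hne1 rfl
    have hZ12 : Z s 1 2 = 0 := by
      have hd2 : deriv (fun u => Z u 0 2) s = X s 0 1 * Z s 1 2 := by
        rw [hD s 2, hX00 s, zero_mul, zero_add]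
      have h0 : deriv (fun u => Z u 0 2) s = 0 := by
        rw [hZ02f]; exact deriv_T2f_right hσ1
      rw [h0] at hd2
      rcases mul_eq_zero.mp hd2.symm with h|h
      · exact absurd h hX01
      · exact h
    have hZ13 : Z s 1 3 = 0 := by
      have hd3 : deriv (fun u => Z u 0 3) s = X s 0 1 * Z s 1 3 := by
        rw [hD s 3, hX00 s, zero_mul, zero_add]
      have h0 : deriv (fun u => Z u 0 3) s = 0 := by
        rw [hZ03f]; exact deriv_const s 0
      rw [h0] at hd3
      rcases mul_eq_zero.mp hd3.symm with h|h
      · exact absurd h hX01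
      · exact h
    have hT2 : Z s 0 2 = 0 := by
      have := congrFun hZ02f s
      rw [this]; exact T2f_right hσ1
    have hT3 : Z s 0 3 = 0 := congrFun hZ03f s
    have e00 := h00 s
    have e01 := h01 s
    have e11 := h11 s
    rw [hT2, hT3] at e00 e01
    rw [hZ12, hZ13] at e01 e11
    linear_combination (Z s 1 1 * Z s 0 1 - Z s 1 0 * Z s 0 0) * e01
      - Z s 1 1 ^ 2 * e00 + Z s 0 0 ^ 2 * e11
  -- left region
  have hleft : ∀ s ∈ Ioo (arcLength17 (-(1/2))) (0:ℝ), Z s 1 1 = 0 := by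
    rintro s ⟨hs1, hs2⟩
    have hσ2 : sigma17 s < 0 := sigma_neg hs2
    have hσ1 : -(1/2) < sigma17 s := by
      have := sigma_mono hs1
      rwa [arc_leftInv] at this
    have hd2 : deriv (fun u => Z u 0 2) s = X s 0 1 * Z s 1 2 := by
      rw [hD s 2, hX00 s, zero_mul, zero_add]
    have hne2 : deriv (fun u => Z u 0 2) s ≠ 0 := by
      rw [hZ02f]; exact deriv_T2f_ne hσ1 hσ2
    have hX01 : X s 0 1 ≠ 0 := by
      intro h
      rw [hd2, h, zero_mul] at hne2
      exact hne2 rfl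
    have hd1 : deriv (fun u => Z u 0 1) s = X s 0 1 * Z s 1 1 := by
      rw [hD s 1, hX00 s, zero_mul, zero_add]
    have h0 : deriv (fun u => Z u 0 1) s = 0 := by
      rw [hZ01f]; exact deriv_T1f_left hσ2
    rw [h0] at hd1
    rcases mul_eq_zero.mp hd1.symm with h|h
    · exact absurd h hX01
    · exact h
  -- continuity and the contradiction at 0
  have hc11 : Continuous (fun s => Z s 1 1) := (hcd 1 1).continuous
  have hc00 : Continuous (fun s => Z s 0 0) := (hcd 0 0).continuous
  have hf0 : Z 0 1 1 = 0 := by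
    have heq : Set.EqOn (fun s => Z s 1 1) (fun _ => (0:ℝ))
        (Ioo (arcLength17 (-(1/2))) 0) := fun s hs => hleft s hs
    have hcl := heq.closure hc11 continuous_const
    have h0m : (0:ℝ) ∈ closure (Ioo (arcLength17 (-(1/2))) (0:ℝ)) := by
      rw [closure_Ioo (ne_of_lt hb)]
      exact ⟨hb.le, le_rfl⟩
    exact hcl h0m
  have hg0 : Z 0 1 1 ^ 2 = Z 0 0 0 ^ 2 := by
    have heq : Set.EqOn (fun s => Z s 1 1 ^ 2) (fun s => Z s 0 0 ^ 2)
        (Ioo (0:ℝ) (arcLength17 (1/2))) := fun s hs => hright s hs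
    have hcl := heq.closure (hc11.pow 2) (hc00.pow 2)
    have h0m : (0:ℝ) ∈ closure (Ioo (0:ℝ) (arcLength17 (1/2))) := by
      rw [closure_Ioo (ne_of_lt ha)]
      exact ⟨le_rfl, ha.le⟩
    exact hcl h0m
  have hZ000 : Z 0 0 0 = 1 := by
    have := congrFun hZ00f 0
    rw [this, T0f_zero]
  rw [hf0, hZ000] at hg0
  norm_num at hg0

end Bishop

/-- curve17 is smooth with nowhere-vanishing derivative, and its arc-length
reparametrization is a regular curve admitting a generalized Bishop frame of type C but no
generalized Bishop frame of type D. -/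
theorem typeC_not_typeD_example :
    ContDiff ℝ (⊤ : ℕ∞) curve17 ∧ (∀ t, deriv curve17 t ≠ 0) ∧
    Function.LeftInverse sigma17 arcLength17 ∧
    Function.RightInverse sigma17 arcLength17 ∧
    IsRegularCurve Set.univ (curve17 ∘ sigma17) ∧
    AdmitsFrame ShapeC Set.univ (curve17 ∘ sigma17) ∧
    ¬ AdmitsFrame ShapeD Set.univ (curve17 ∘ sigma17) :=
  ⟨Bishop.curve_smooth, Bishop.curve_deriv_ne, Bishop.arc_leftInv, Bishop.arc_rightInv,
    Bishop.gamma_regular, Bishop.admits_C, Bishop.not_admits_D⟩
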